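/- arXiv:2502.19620 — 2 statements merged into one kernel-verified Lean document; each statement's English description precedes it below -/
import Mathlib

section
/- Proposition 1 (identification of DATT(g,t), never-treated comparison, degenerate covariates): Suppose the parallel-gaps assumption based on the never-treated group holds: E[Y_t(∞) − Y_{g−1}(∞) | G=g, S_s] − E[Y_t(∞) − Y_{g−1}(∞) | G=g, S_{s'}] = E[Y_t(∞) − Y_{g−1}(∞) | G=∞, S_s] − E[Y_t(∞) − Y_{g−1}(∞) | G=∞, S_{s'}]. Then DATT(g,t) = (E[Y_t − Y_{g−1} | G=g, S_s] − E[Y_t − Y_{g−1} | G=g, S_{s'}]) − (E[Y_t − Y_{g−1} | G=∞, S_s] − E[Y_t − Y_{g−1} | G=∞, S_{s'}]), where Y_τ denotes the observed outcome at period τ. -/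
/-!
By no anticipation, on cohort `g` the observed change `Y_t - Y_{g-1}` is the treatment effect
plus the untreated change, and on the never-treated it is the untreated change alone. Integrating
over the four cells and taking the triple difference, the parallel-gaps assumption cancels the
untreated changes.
-/

open MeasureTheory ProbabilityTheory

section

variable {Ω E : Type*} [MeasurableSpace Ω] [NormedAddCommGroup E] {μ : Measure Ω} {A : Set Ω}
  {f h : Ω → E}

/-- `A` need not be measurable: only the set where the measurable modifications agree must be. -/
theorem ae_restrict_eq_of_eqOn (hf : AEStronglyMeasurable f μ) (hh : AEStronglyMeasurable h μ)
    (hfh : Set.EqOn f h A) : f =ᵐ[μ.restrict A] h := by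
  have hmk : hf.mk f =ᵐ[μ.restrict A] hh.mk h :=
    (ae_restrict_iff (hf.stronglyMeasurable_mk.measurableSet_eq_fun hh.stronglyMeasurable_mk)).2 <|
      by filter_upwards [hf.ae_eq_mk, hh.ae_eq_mk] with ω hfω hhω hω
         rw [← hfω, ← hhω, hfh hω]
  filter_upwards [ae_restrict_of_ae hf.ae_eq_mk, hmk, ae_restrict_of_ae hh.ae_eq_mk]
    with ω hfω hω hhω
  rw [hfω, hω, hhω]

theorem integral_cond_congr_of_eqOn [NormedSpace ℝ E] (hf : AEStronglyMeasurable f μ)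
    (hh : AEStronglyMeasurable h μ) (hfh : Set.EqOn f h A) :
    ∫ ω, f ω ∂μ[|A] = ∫ ω, h ω ∂μ[|A] :=
  integral_congr_ae <| Measure.ae_smul_measure (ae_restrict_eq_of_eqOn hf hh hfh) _

theorem MeasureTheory.Integrable.cond (hf : Integrable f μ) (A : Set Ω) : Integrable f μ[|A] := by
  by_cases hA : μ A = 0
  · rw [cond_eq_zero_of_meas_eq_zero hA]
    exact integrable_zero_measure
  · exact hf.restrict.smul_measure (ENNReal.inv_ne_top.2 hA)

end

section

variable {Ω : Type*} {G : Ω → ℕ∞} {Y : ℕ → ℕ∞ → Ω → ℝ} {Yobs : ℕ → Ω → ℝ}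
  (hYobs : ∀ τ ω, Yobs τ ω = if G ω ≤ (τ : ℕ∞) then Y τ (G ω) ω else Y τ ⊤ ω)
include hYobs

theorem observed_change_of_cohort {g t : ℕ} {ω : Ω} (hg1 : 1 ≤ g) (hgt : g ≤ t)
    (hω : G ω = g) :
    Yobs t ω - Yobs (g - 1) ω = (Y t g ω - Y t ⊤ ω) + (Y t ⊤ ω - Y (g - 1) ⊤ ω) := by
  have hpre : ¬ G ω ≤ ((g - 1 : ℕ) : ℕ∞) := by
    rw [hω, Nat.cast_le]
    omega
  rw [hYobs, hYobs, if_pos (hω ▸ Nat.cast_le.2 hgt), if_neg hpre, hω]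
  ring

theorem observed_change_of_never_treated {s t : ℕ} {ω : Ω} (hω : G ω = ⊤) :
    Yobs t ω - Yobs s ω = Y t ⊤ ω - Y s ⊤ ω := by
  simp only [hYobs, hω, top_le_iff, ENat.natCast_ne_top, if_false]

end

/-- `G ω = ⊤` encodes never treated, `Ssᶜ` is subgroup `s'`, `Y τ γ` is `Y_τ(γ)`. -/
theorem datt_identification_never_treated_general
    {Ω : Type*} [MeasurableSpace Ω] (μ : Measure Ω)
    (G : Ω → ℕ∞)
    (Ss : Set Ω)
    (Y : ℕ → ℕ∞ → Ω → ℝ)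
    (hIntY : ∀ τ γ, Integrable (Y τ γ) μ)
    (Yobs : ℕ → Ω → ℝ)
    (hYobs : ∀ τ ω, Yobs τ ω = if G ω ≤ (τ : ℕ∞) then Y τ (G ω) ω else Y τ ⊤ ω)
    (hIntYobs : ∀ τ, Integrable (Yobs τ) μ)
    (g t : ℕ) (hg1 : 1 ≤ g) (hgt : g ≤ t)
    -- Parallel gaps based on the not-yet-treated group
    (hPG : (∫ ω, (Y t ⊤ ω - Y (g-1) ⊤ ω) ∂(μ[|{ω | G ω = (g : ℕ∞)} ∩ Ss]))
          - (∫ ω, (Y t ⊤ ω - Y (g-1) ⊤ ω) ∂(μ[|{ω | G ω = (g : ℕ∞)} ∩ Ssᶜ]))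
        = (∫ ω, (Y t ⊤ ω - Y (g-1) ⊤ ω) ∂(μ[|{ω | G ω = ⊤} ∩ Ss]))
          - (∫ ω, (Y t ⊤ ω - Y (g-1) ⊤ ω) ∂(μ[|{ω | G ω = ⊤} ∩ Ssᶜ]))) :
    -- DATT(g,t) equals the triple-difference of observed outcomes
    (∫ ω, (Y t (g : ℕ∞) ω - Y t ⊤ ω) ∂(μ[|{ω | G ω = (g : ℕ∞)} ∩ Ss]))
      - (∫ ω, (Y t (g : ℕ∞) ω - Y t ⊤ ω) ∂(μ[|{ω | G ω = (g : ℕ∞)} ∩ Ssᶜ]))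
    = ((∫ ω, (Yobs t ω - Yobs (g-1) ω) ∂(μ[|{ω | G ω = (g : ℕ∞)} ∩ Ss]))
        - (∫ ω, (Yobs t ω - Yobs (g-1) ω) ∂(μ[|{ω | G ω = (g : ℕ∞)} ∩ Ssᶜ])))
      - ((∫ ω, (Yobs t ω - Yobs (g-1) ω) ∂(μ[|{ω | G ω = ⊤} ∩ Ss]))
        - (∫ ω, (Yobs t ω - Yobs (g-1) ω) ∂(μ[|{ω | G ω = ⊤} ∩ Ssᶜ]))) := by
  have hIntObs : AEStronglyMeasurable (fun ω => Yobs t ω - Yobs (g - 1) ω) μ :=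
    ((hIntYobs t).sub (hIntYobs (g - 1))).aestronglyMeasurable
  have hEffect := (hIntY t g).sub (hIntY t ⊤)
  have hTrend := (hIntY t ⊤).sub (hIntY (g - 1) ⊤)
  have hCohort : ∀ B : Set Ω,
      ∫ ω, (Yobs t ω - Yobs (g - 1) ω) ∂(μ[|{ω | G ω = (g : ℕ∞)} ∩ B])
        = (∫ ω, (Y t (g : ℕ∞) ω - Y t ⊤ ω) ∂(μ[|{ω | G ω = (g : ℕ∞)} ∩ B]))
          + ∫ ω, (Y t ⊤ ω - Y (g - 1) ⊤ ω) ∂(μ[|{ω | G ω = (g : ℕ∞)} ∩ B]) := fun B => by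
    rw [integral_cond_congr_of_eqOn hIntObs (hEffect.add hTrend).aestronglyMeasurable
      fun ω hω => observed_change_of_cohort hYobs hg1 hgt hω.1]
    exact integral_add (hEffect.cond _) (hTrend.cond _)
  have hNever : ∀ B : Set Ω,
      ∫ ω, (Yobs t ω - Yobs (g - 1) ω) ∂(μ[|{ω | G ω = ⊤} ∩ B])
        = ∫ ω, (Y t ⊤ ω - Y (g - 1) ⊤ ω) ∂(μ[|{ω | G ω = ⊤} ∩ B]) := fun B =>
    integral_cond_congr_of_eqOn hIntObs hTrend.aestronglyMeasurable
      fun ω hω => observed_change_of_never_treated hYobs hω.1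
  rw [hCohort, hCohort, hNever, hNever]
  linarith

/-- Proposition 1 (identification of `DATT(g,t)`, never-treated comparison,
degenerate covariates). `G` is the cohort variable (`⊤` = never treated),
`Ss` is subgroup `s`, `Ssᶜ` is subgroup `s'`. `Y τ γ` is the potential outcome
`Y_τ(γ)` and `Yobs τ` is the observed outcome at period `τ`. -/
theorem datt_identification_never_treated
    {Ω : Type*} [MeasurableSpace Ω] (μ : Measure Ω) [IsProbabilityMeasure μ]
    (T : ℕ) (hT : 1 ≤ T)
    (G : Ω → ℕ∞) (hGrange : ∀ ω, G ω = ⊤ ∨ (1 ≤ G ω ∧ G ω ≤ (T : ℕ∞)))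
    (Ss : Set Ω)
    (Y : ℕ → ℕ∞ → Ω → ℝ)
    (hIntY : ∀ τ γ, Integrable (Y τ γ) μ)
    (Yobs : ℕ → Ω → ℝ)
    (hYobs : ∀ τ ω, Yobs τ ω = if G ω ≤ (τ : ℕ∞) then Y τ (G ω) ω else Y τ ⊤ ω)
    (hIntYobs : ∀ τ, Integrable (Yobs τ) μ)
    (g t : ℕ) (hg1 : 1 ≤ g) (hgt : g ≤ t) (htT : t ≤ T)
    (hpos1 : 0 < μ ({ω | G ω = (g : ℕ∞)} ∩ Ss))
    (hpos2 : 0 < μ ({ω | G ω = (g : ℕ∞)} ∩ Ssᶜ))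
    (hpos3 : 0 < μ ({ω | G ω = ⊤} ∩ Ss))
    (hpos4 : 0 < μ ({ω | G ω = ⊤} ∩ Ssᶜ))
    -- Parallel gaps based on the not-yet-treated group
    (hPG : (∫ ω, (Y t ⊤ ω - Y (g-1) ⊤ ω) ∂(μ[|{ω | G ω = (g : ℕ∞)} ∩ Ss]))
          - (∫ ω, (Y t ⊤ ω - Y (g-1) ⊤ ω) ∂(μ[|{ω | G ω = (g : ℕ∞)} ∩ Ssᶜ]))
        = (∫ ω, (Y t ⊤ ω - Y (g-1) ⊤ ω) ∂(μ[|{ω | G ω = ⊤} ∩ Ss]))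
          - (∫ ω, (Y t ⊤ ω - Y (g-1) ⊤ ω) ∂(μ[|{ω | G ω = ⊤} ∩ Ssᶜ]))) :
    -- DATT(g,t) equals the triple-difference of observed outcomes
    (∫ ω, (Y t (g : ℕ∞) ω - Y t ⊤ ω) ∂(μ[|{ω | G ω = (g : ℕ∞)} ∩ Ss]))
      - (∫ ω, (Y t (g : ℕ∞) ω - Y t ⊤ ω) ∂(μ[|{ω | G ω = (g : ℕ∞)} ∩ Ssᶜ]))
    = ((∫ ω, (Yobs t ω - Yobs (g-1) ω) ∂(μ[|{ω | G ω = (g : ℕ∞)} ∩ Ss]))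
        - (∫ ω, (Yobs t ω - Yobs (g-1) ω) ∂(μ[|{ω | G ω = (g : ℕ∞)} ∩ Ssᶜ])))
      - ((∫ ω, (Yobs t ω - Yobs (g-1) ω) ∂(μ[|{ω | G ω = ⊤} ∩ Ss]))
        - (∫ ω, (Yobs t ω - Yobs (g-1) ω) ∂(μ[|{ω | G ω = ⊤} ∩ Ssᶜ]))) :=
  datt_identification_never_treated_general μ G Ss Y hIntY Yobs hYobs hIntYobs g t hg1 hgt hPG
end

section
/- Proposition 3, doubly-robust identification (not-yet-treated comparison): Under the overlap condition and the conditional identification conditions (a), (b), (c) with comparison event C = {G > t}, and given 𝒳-measurable integrable outcome functions μ^{s'}_{g} and μ^{s'}_{c} satisfying, almost surely, μ^{s'}_{g}·π_{g,s'} = E[1_{G=g}1_{S_{s'}}·ΔY | 𝒳] and μ^{s'}_{c}·π_{c,s'} = E[1_C 1_{S_{s'}}·ΔY | 𝒳], the doubly-robust estimand identifies the causal difference in ATTs: E[(w₁ − w₂)·(ΔY − μ^{s'}_{g})] − E[(w₃ − w₄)·(ΔY − μ^{s'}_{c})] = CDATT(g,t), where ΔY = Y_t − Y_{g−1} is the observed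 change in outcomes and the weights are w₁ = 1_{G=g}1_{S_s}/p, w₂ = (1_{G=g}1_{S_{s'}}·π_{g,s}/π_{g,s'}) / E[1_{G=g}1_{S_{s'}}·π_{g,s}/π_{g,s'}], w₃ = (1_C 1_{S_s}·π_{g,s}/π_{c,s}) / E[1_C 1_{S_s}·π_{g,s}/π_{c,s}], and w₄ = (1_C 1_{S_{s'}}·π_{g,s}/π_{c,s'}) / E[1_C 1_{S_{s'}}·π_{g,s}/π_{c,s'}]. -/
/-!
Conditioning on the covariates turns every weighted term into an integral of propensity ratios
against conditional expectations. The outcome models make the conditional mean of the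
`s'`-residuals vanish on both `s'`-groups, so the `w₂` and `w₄` terms are zero; parallel trends
in `s` turns the `w₃` term into the untreated trend of the treated `s`-group; and no subgroup
selection together with parallel trends in `s'` identifies the `π_{g,s}`-weighted difference of
the outcome models with the `s'`-effect on the treated `s`-group. All normalising constants equal
`E[π_{g,s}] = p`.
-/

open MeasureTheory ProbabilityTheory
open scoped Classical

open Set

section Propensity

variable {Ω : Type*} {m m0 : MeasurableSpace Ω} {μ : Measure Ω} {E : Set Ω}
  {π πE f q : Ω → ℝ} {ε : ℝ}

lemma ae_norm_le_one_of_ae_eq_condExp_indicator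
    (hπ : π =ᵐ[μ] μ[E.indicator (fun _ => (1 : ℝ)) | m]) : ∀ᵐ ω ∂μ, ‖π ω‖ ≤ 1 := by
  have h1 : ∀ᵐ ω ∂μ, |E.indicator (fun _ => (1 : ℝ)) ω| ≤ 1 :=
    .of_forall fun ω => by by_cases h : ω ∈ E <;> simp [h]
  filter_upwards [hπ, ae_bdd_abs_condExp_of_ae_bdd_abs (m := m) h1] with ω h h'
  rwa [Real.norm_eq_abs, h]

lemma ae_norm_div_le_inv (hπ : ∀ᵐ ω ∂μ, ‖π ω‖ ≤ 1) (hε : 0 < ε)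
    (hπE : ∀ᵐ ω ∂μ, ε ≤ πE ω) : ∀ᵐ ω ∂μ, ‖π ω / πE ω‖ ≤ ε⁻¹ := by
  filter_upwards [hπ, hπE] with ω h1 h2
  rw [norm_div, Real.norm_of_nonneg (hε.le.trans h2), ← one_div]
  exact div_le_div₀ zero_le_one h1 hε h2

lemma integral_cond_eq_inv_mul_integral_indicator (hE : MeasurableSet E) :
    ∫ ω, f ω ∂μ[|E] = (μ.real E)⁻¹ * ∫ ω, E.indicator f ω ∂μ := by
  rw [ProbabilityTheory.cond, integral_smul_measure, ← integral_indicator hE,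
    ENNReal.toReal_inv, smul_eq_mul, measureReal_def]

lemma indicator_one_mul_apply (ω : Ω) :
    E.indicator (fun _ => (1 : ℝ)) ω * f ω = E.indicator f ω := by
  by_cases h : ω ∈ E <;> simp [h]

noncomputable def ipwWeight (E : Set Ω) (π πE : Ω → ℝ) (ω : Ω) : ℝ :=
  E.indicator (fun _ => 1) ω * π ω / πE ω

lemma ipwWeight_mul (ω : Ω) :
    ipwWeight E π πE ω * f ω = π ω / πE ω * E.indicator f ω := by
  by_cases h : ω ∈ E <;> simp [ipwWeight, h, div_mul_eq_mul_div]

lemma integrable_ipwWeight_mul (hm : m ≤ m0) (hE : MeasurableSet E)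
    (hπm : StronglyMeasurable[m] π) (hπ : ∀ᵐ ω ∂μ, ‖π ω‖ ≤ 1)
    (hπEm : StronglyMeasurable[m] πE) (hε : 0 < ε) (hπE : ∀ᵐ ω ∂μ, ε ≤ πE ω)
    (hf : Integrable f μ) : Integrable (fun ω => ipwWeight E π πE ω * f ω) μ := by
  simp_rw [ipwWeight_mul]
  exact (hf.indicator hE).bdd_mul ((hπm.div hπEm).mono hm).aestronglyMeasurable
    (ae_norm_div_le_inv hπ hε hπE)

lemma ae_sub_mul_eq_condExp_of_selection_of_trend {E₁ E₂ E₄ : Set Ω}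
    {π₁ π₂ π₄ ΔY τ Δ μg μc : Ω → ℝ} (hE₂ : MeasurableSet E₂) (hτ : Integrable τ μ)
    (hΔ : Integrable Δ μ) (hπ₂ : ∀ᵐ ω ∂μ, π₂ ω ≠ 0) (hπ₄ : ∀ᵐ ω ∂μ, π₄ ω ≠ 0)
    (hΔY₂ : EqOn ΔY (τ + Δ) E₂) (hΔY₄ : EqOn ΔY Δ E₄)
    (hμg : (fun ω => μg ω * π₂ ω) =ᵐ[μ] μ[E₂.indicator ΔY|m])
    (hμc : (fun ω => μc ω * π₄ ω) =ᵐ[μ] μ[E₄.indicator ΔY|m])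
    (hsel : (fun ω => (μ[E₁.indicator τ|m]) ω * π₂ ω)
      =ᵐ[μ] fun ω => (μ[E₂.indicator τ|m]) ω * π₁ ω)
    (htrend : (fun ω => (μ[E₂.indicator Δ|m]) ω * π₄ ω)
      =ᵐ[μ] fun ω => (μ[E₄.indicator Δ|m]) ω * π₂ ω) :
    (fun ω => (μg ω - μc ω) * π₁ ω) =ᵐ[μ] μ[E₁.indicator τ|m] := by
  have hsplit : μ[E₂.indicator ΔY|m] =ᵐ[μ] μ[E₂.indicator τ|m] + μ[E₂.indicator Δ|m] := by
    rw [indicator_congr hΔY₂, indicator_add']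
    exact condExp_add (hτ.indicator hE₂) (hΔ.indicator hE₂) m
  rw [indicator_congr hΔY₄] at hμc
  filter_upwards [hμg, hμc, hsplit, hsel, htrend, hπ₂, hπ₄] with ω hg hc hs ha hb h₂ h₄
  rw [hs, Pi.add_apply] at hg
  have hΔ₂ : (μ[E₂.indicator Δ|m]) ω = μc ω * π₂ ω :=
    mul_right_cancel₀ h₄ (by rw [hb, ← hc]; ring)
  refine mul_right_cancel₀ h₂ ?_
  linear_combination π₁ ω * hg + π₁ ω * hΔ₂ - ha

variable [IsFiniteMeasure μ]

lemma integral_mul_condExp_of_ae_bdd (hm : m ≤ m0) {h : Ω → ℝ} {c : ℝ}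
    (hh : StronglyMeasurable[m] h) (hbd : ∀ᵐ ω ∂μ, ‖h ω‖ ≤ c) (hf : Integrable f μ) :
    ∫ ω, h ω * (μ[f|m]) ω ∂μ = ∫ ω, h ω * f ω ∂μ := by
  rw [← integral_condExp hm (f := fun ω => h ω * f ω)]
  exact integral_congr_ae (condExp_stronglyMeasurable_mul_of_bound hm hh hf c hbd).symm

lemma condExp_indicator_ae_eq_mul (hq : StronglyMeasurable[m] q) (hqi : Integrable q μ)
    (hE : MeasurableSet E) (hπ : π =ᵐ[μ] μ[E.indicator (fun _ => (1 : ℝ)) | m]) :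
    μ[E.indicator q|m] =ᵐ[μ] q * π := by
  have hq1 : E.indicator q = q * E.indicator (fun _ => (1 : ℝ)) := by
    ext ω; by_cases h : ω ∈ E <;> simp [h]
  rw [hq1]
  filter_upwards [condExp_mul_of_stronglyMeasurable_left hq (hq1 ▸ hqi.indicator hE)
    ((integrable_const 1).indicator hE), hπ] with ω h1 h2
  rw [h1, Pi.mul_apply, Pi.mul_apply, h2]

lemma integral_indicator_eq_integral_mul (hm : m ≤ m0) (hq : StronglyMeasurable[m] q)
    (hqi : Integrable q μ) (hE : MeasurableSet E)
    (hπ : π =ᵐ[μ] μ[E.indicator (fun _ => (1 : ℝ)) | m]) :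
    ∫ ω, E.indicator q ω ∂μ = ∫ ω, q ω * π ω ∂μ := by
  rw [← integral_condExp hm]
  exact integral_congr_ae (condExp_indicator_ae_eq_mul hq hqi hE hπ)

lemma integral_eq_measureReal_of_ae_eq_condExp_indicator (hm : m ≤ m0) (hE : MeasurableSet E)
    (hπ : π =ᵐ[μ] μ[E.indicator (fun _ => (1 : ℝ)) | m]) : ∫ ω, π ω ∂μ = μ.real E := by
  rw [integral_congr_ae hπ, integral_condExp hm, integral_indicator_const _ hE, smul_eq_mul,
    mul_one]

lemma integral_ipwWeight_mul_sub (hm : m ≤ m0) (hE : MeasurableSet E)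
    (hπm : StronglyMeasurable[m] π) (hπ : ∀ᵐ ω ∂μ, ‖π ω‖ ≤ 1)
    (hπEm : StronglyMeasurable[m] πE) (hπE : πE =ᵐ[μ] μ[E.indicator (fun _ => (1 : ℝ)) | m])
    (hε : 0 < ε) (hπEε : ∀ᵐ ω ∂μ, ε ≤ πE ω) (hf : Integrable f μ)
    (hq : StronglyMeasurable[m] q) (hqi : Integrable q μ) :
    ∫ ω, ipwWeight E π πE ω * (f ω - q ω) ∂μ
      = ∫ ω, π ω / πE ω * (μ[E.indicator f|m]) ω ∂μ - ∫ ω, q ω * π ω ∂μ := by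
  have hr : StronglyMeasurable[m] (fun ω => π ω / πE ω) := hπm.div hπEm
  have hrbd := ae_norm_div_le_inv hπ hε hπEε
  have hres : μ[E.indicator (f - q)|m] =ᵐ[μ] μ[E.indicator f|m] - q * πE := by
    rw [indicator_sub']
    filter_upwards [condExp_sub (hf.indicator hE) (hqi.indicator hE) m,
      condExp_indicator_ae_eq_mul hq hqi hE hπE] with ω h1 h2
    rw [h1, Pi.sub_apply, Pi.sub_apply, h2]
  calc ∫ ω, ipwWeight E π πE ω * (f ω - q ω) ∂μ
      = ∫ ω, π ω / πE ω * E.indicator (f - q) ω ∂μ := by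
        simp_rw [← Pi.sub_apply f q, ipwWeight_mul]
    _ = ∫ ω, π ω / πE ω * (μ[E.indicator (f - q)|m]) ω ∂μ :=
        (integral_mul_condExp_of_ae_bdd hm hr hrbd ((hf.sub hqi).indicator hE)).symm
    _ = ∫ ω, π ω / πE ω * (μ[E.indicator f|m]) ω - q ω * π ω ∂μ := by
        refine integral_congr_ae ?_
        filter_upwards [hres, hπEε] with ω h1 h2
        have : πE ω ≠ 0 := (hε.trans_le h2).ne'
        rw [h1, Pi.sub_apply, Pi.mul_apply]
        field_simp
    _ = _ := integral_sub (integrable_condExp.bdd_mul (hr.mono hm).aestronglyMeasurable hrbd)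
        (hqi.mul_bdd (hπm.mono hm).aestronglyMeasurable hπ)

lemma integral_ipwWeight (hm : m ≤ m0) (hE : MeasurableSet E)
    (hπm : StronglyMeasurable[m] π) (hπ : ∀ᵐ ω ∂μ, ‖π ω‖ ≤ 1)
    (hπEm : StronglyMeasurable[m] πE) (hπE : πE =ᵐ[μ] μ[E.indicator (fun _ => (1 : ℝ)) | m])
    (hε : 0 < ε) (hπEε : ∀ᵐ ω ∂μ, ε ≤ πE ω) :
    ∫ ω, ipwWeight E π πE ω ∂μ = ∫ ω, π ω ∂μ := by
  calc ∫ ω, ipwWeight E π πE ω ∂μ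
      = ∫ ω, π ω / πE ω * E.indicator (fun _ => (1 : ℝ)) ω ∂μ := by
        simp_rw [← ipwWeight_mul, mul_one]
    _ = ∫ ω, π ω / πE ω * (μ[E.indicator (fun _ => (1 : ℝ))|m]) ω ∂μ :=
        (integral_mul_condExp_of_ae_bdd hm (hπm.div hπEm) (ae_norm_div_le_inv hπ hε hπEε)
          ((integrable_const 1).indicator hE)).symm
    _ = ∫ ω, π ω ∂μ := by
        refine integral_congr_ae ?_
        filter_upwards [hπE, hπEε] with ω h1 h2
        rw [← h1]
        exact div_mul_cancel₀ _ (hε.trans_le h2).ne'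

lemma integral_ipwWeight_mul_sub_eq_zero (hm : m ≤ m0) (hE : MeasurableSet E)
    (hπm : StronglyMeasurable[m] π) (hπ : ∀ᵐ ω ∂μ, ‖π ω‖ ≤ 1)
    (hπEm : StronglyMeasurable[m] πE) (hπE : πE =ᵐ[μ] μ[E.indicator (fun _ => (1 : ℝ)) | m])
    (hε : 0 < ε) (hπEε : ∀ᵐ ω ∂μ, ε ≤ πE ω) (hf : Integrable f μ)
    (hq : StronglyMeasurable[m] q) (hqi : Integrable q μ)
    (hmodel : (fun ω => q ω * πE ω) =ᵐ[μ] μ[E.indicator f|m]) :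
    ∫ ω, ipwWeight E π πE ω * (f ω - q ω) ∂μ = 0 := by
  rw [integral_ipwWeight_mul_sub hm hE hπm hπ hπEm hπE hε hπEε hf hq hqi, sub_eq_zero]
  refine integral_congr_ae ?_
  filter_upwards [hmodel, hπEε] with ω h1 h2
  have : πE ω ≠ 0 := (hε.trans_le h2).ne'
  rw [← h1]
  field_simp

lemma integral_indicator_mul_sub (hm : m ≤ m0) (hE : MeasurableSet E)
    (hπ : π =ᵐ[μ] μ[E.indicator (fun _ => (1 : ℝ)) | m]) (hf : Integrable f μ)
    (hq : StronglyMeasurable[m] q) (hqi : Integrable q μ) :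
    ∫ ω, E.indicator (fun _ => (1 : ℝ)) ω * (f ω - q ω) ∂μ
      = ∫ ω, E.indicator f ω ∂μ - ∫ ω, q ω * π ω ∂μ := by
  have h : ∀ ω, E.indicator (fun _ => (1 : ℝ)) ω * (f ω - q ω)
      = E.indicator f ω - E.indicator q ω := fun ω => by by_cases h : ω ∈ E <;> simp [h]
  simp_rw [h]
  rw [integral_sub (hf.indicator hE) (hqi.indicator hE),
    integral_indicator_eq_integral_mul hm hq hqi hE hπ]

lemma integral_div_mul_condExp_eq_of_ae_mul_eq (hm : m ≤ m0) {E' : Set Ω}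
    (hπE : ∀ᵐ ω ∂μ, πE ω ≠ 0)
    (h : (fun ω => (μ[E'.indicator f|m]) ω * πE ω) =ᵐ[μ] fun ω => (μ[E.indicator f|m]) ω * π ω) :
    ∫ ω, π ω / πE ω * (μ[E.indicator f|m]) ω ∂μ = ∫ ω, E'.indicator f ω ∂μ := by
  rw [← integral_condExp hm (f := E'.indicator f)]
  refine integral_congr_ae ?_
  filter_upwards [h, hπE] with ω h1 h2
  field_simp
  linear_combination -h1

/- The events `E₁, E₂, E₃, E₄` play the roles of `{G = g} ∩ S_s`, `{G = g} ∩ S_{s'}`, `C ∩ S_s`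
and `C ∩ S_{s'}`. -/
noncomputable def drEstimand (μ : Measure Ω) (E₁ E₂ E₃ E₄ : Set Ω)
    (π₁ π₂ π₃ π₄ ΔY μg μc : Ω → ℝ) : ℝ :=
  ∫ ω, (E₁.indicator (fun _ => (1 : ℝ)) ω / μ.real E₁
      - ipwWeight E₂ π₁ π₂ ω / ∫ ω', ipwWeight E₂ π₁ π₂ ω' ∂μ) * (ΔY ω - μg ω) ∂μ
    - ∫ ω, (ipwWeight E₃ π₁ π₃ ω / ∫ ω', ipwWeight E₃ π₁ π₃ ω' ∂μ
      - ipwWeight E₄ π₁ π₄ ω / ∫ ω', ipwWeight E₄ π₁ π₄ ω' ∂μ) * (ΔY ω - μc ω) ∂μ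

lemma drEstimand_eq_div_measureReal {E₁ E₂ E₃ E₄ : Set Ω} {π₁ π₂ π₃ π₄ ΔY μg μc : Ω → ℝ}
    (hm : m ≤ m0) (hE₁ : MeasurableSet E₁) (hE₂ : MeasurableSet E₂) (hE₃ : MeasurableSet E₃)
    (hE₄ : MeasurableSet E₄)
    (hπ₁m : StronglyMeasurable[m] π₁) (hπ₁ : π₁ =ᵐ[μ] μ[E₁.indicator (fun _ => (1 : ℝ)) | m])
    (hπ₂m : StronglyMeasurable[m] π₂) (hπ₂ : π₂ =ᵐ[μ] μ[E₂.indicator (fun _ => (1 : ℝ)) | m])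
    (hπ₃m : StronglyMeasurable[m] π₃) (hπ₃ : π₃ =ᵐ[μ] μ[E₃.indicator (fun _ => (1 : ℝ)) | m])
    (hπ₄m : StronglyMeasurable[m] π₄) (hπ₄ : π₄ =ᵐ[μ] μ[E₄.indicator (fun _ => (1 : ℝ)) | m])
    (hε : 0 < ε) (hπ₂ε : ∀ᵐ ω ∂μ, ε ≤ π₂ ω) (hπ₃ε : ∀ᵐ ω ∂μ, ε ≤ π₃ ω)
    (hπ₄ε : ∀ᵐ ω ∂μ, ε ≤ π₄ ω) (hΔY : Integrable ΔY μ)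
    (hμgm : StronglyMeasurable[m] μg) (hμgi : Integrable μg μ)
    (hμcm : StronglyMeasurable[m] μc) (hμci : Integrable μc μ)
    (hμg : (fun ω => μg ω * π₂ ω) =ᵐ[μ] μ[E₂.indicator ΔY|m])
    (hμc : (fun ω => μc ω * π₄ ω) =ᵐ[μ] μ[E₄.indicator ΔY|m]) :
    drEstimand μ E₁ E₂ E₃ E₄ π₁ π₂ π₃ π₄ ΔY μg μc
      = ((∫ ω, E₁.indicator ΔY ω ∂μ - ∫ ω, μg ω * π₁ ω ∂μ)
        - (∫ ω, π₁ ω / π₃ ω * (μ[E₃.indicator ΔY|m]) ω ∂μ - ∫ ω, μc ω * π₁ ω ∂μ))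
        / μ.real E₁ := by
  have hπ₁bd := ae_norm_le_one_of_ae_eq_condExp_indicator hπ₁
  have hg : Integrable (fun ω => ΔY ω - μg ω) μ := hΔY.sub hμgi
  have hc : Integrable (fun ω => ΔY ω - μc ω) μ := hΔY.sub hμci
  rw [drEstimand, integral_ipwWeight hm hE₂ hπ₁m hπ₁bd hπ₂m hπ₂ hε hπ₂ε,
    integral_ipwWeight hm hE₃ hπ₁m hπ₁bd hπ₃m hπ₃ hε hπ₃ε,
    integral_ipwWeight hm hE₄ hπ₁m hπ₁bd hπ₄m hπ₄ hε hπ₄ε,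
    integral_eq_measureReal_of_ae_eq_condExp_indicator hm hE₁ hπ₁]
  conv_lhs => simp only [sub_mul, div_mul_eq_mul_div]
  rw [integral_sub (((hg.indicator hE₁).congr (.of_forall fun ω =>
        (indicator_one_mul_apply ω).symm)).div_const _)
      ((integrable_ipwWeight_mul hm hE₂ hπ₁m hπ₁bd hπ₂m hε hπ₂ε hg).div_const _),
    integral_sub ((integrable_ipwWeight_mul hm hE₃ hπ₁m hπ₁bd hπ₃m hε hπ₃ε hc).div_const _)
      ((integrable_ipwWeight_mul hm hE₄ hπ₁m hπ₁bd hπ₄m hε hπ₄ε hc).div_const _),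
    integral_div, integral_div, integral_div, integral_div,
    integral_indicator_mul_sub hm hE₁ hπ₁ hΔY hμgm hμgi,
    integral_ipwWeight_mul_sub_eq_zero hm hE₂ hπ₁m hπ₁bd hπ₂m hπ₂ hε hπ₂ε hΔY hμgm hμgi hμg,
    integral_ipwWeight_mul_sub hm hE₃ hπ₁m hπ₁bd hπ₃m hπ₃ hε hπ₃ε hΔY hμcm hμci,
    integral_ipwWeight_mul_sub_eq_zero hm hE₄ hπ₁m hπ₁bd hπ₄m hπ₄ hε hπ₄ε hΔY hμcm hμci hμc]
  ring

theorem drEstimand_eq_cdatt {E₁ E₂ E₃ E₄ : Set Ω} {π₁ π₂ π₃ π₄ ΔY τ τ' Δ Δ' μg μc : Ω → ℝ}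
    (hm : m ≤ m0) (hE₁ : MeasurableSet E₁) (hE₂ : MeasurableSet E₂) (hE₃ : MeasurableSet E₃)
    (hE₄ : MeasurableSet E₄)
    (hπ₁m : StronglyMeasurable[m] π₁) (hπ₁ : π₁ =ᵐ[μ] μ[E₁.indicator (fun _ => (1 : ℝ)) | m])
    (hπ₂m : StronglyMeasurable[m] π₂) (hπ₂ : π₂ =ᵐ[μ] μ[E₂.indicator (fun _ => (1 : ℝ)) | m])
    (hπ₃m : StronglyMeasurable[m] π₃) (hπ₃ : π₃ =ᵐ[μ] μ[E₃.indicator (fun _ => (1 : ℝ)) | m])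
    (hπ₄m : StronglyMeasurable[m] π₄) (hπ₄ : π₄ =ᵐ[μ] μ[E₄.indicator (fun _ => (1 : ℝ)) | m])
    (hε : 0 < ε) (hπ₂ε : ∀ᵐ ω ∂μ, ε ≤ π₂ ω) (hπ₃ε : ∀ᵐ ω ∂μ, ε ≤ π₃ ω)
    (hπ₄ε : ∀ᵐ ω ∂μ, ε ≤ π₄ ω)
    (hΔY : Integrable ΔY μ) (hτ : Integrable τ μ) (hτ' : Integrable τ' μ)
    (hΔ : Integrable Δ μ) (hΔ' : Integrable Δ' μ)
    (hΔY₁ : EqOn ΔY (τ + Δ) E₁) (hΔY₂ : EqOn ΔY (τ' + Δ') E₂) (hΔY₃ : EqOn ΔY Δ E₃)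
    (hΔY₄ : EqOn ΔY Δ' E₄)
    (hsel : (fun ω => (μ[E₁.indicator τ'|m]) ω * π₂ ω)
      =ᵐ[μ] fun ω => (μ[E₂.indicator τ'|m]) ω * π₁ ω)
    (htrend : (fun ω => (μ[E₁.indicator Δ|m]) ω * π₃ ω)
      =ᵐ[μ] fun ω => (μ[E₃.indicator Δ|m]) ω * π₁ ω)
    (htrend' : (fun ω => (μ[E₂.indicator Δ'|m]) ω * π₄ ω)
      =ᵐ[μ] fun ω => (μ[E₄.indicator Δ'|m]) ω * π₂ ω)
    (hμgm : StronglyMeasurable[m] μg) (hμgi : Integrable μg μ)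
    (hμcm : StronglyMeasurable[m] μc) (hμci : Integrable μc μ)
    (hμg : (fun ω => μg ω * π₂ ω) =ᵐ[μ] μ[E₂.indicator ΔY|m])
    (hμc : (fun ω => μc ω * π₄ ω) =ᵐ[μ] μ[E₄.indicator ΔY|m]) :
    drEstimand μ E₁ E₂ E₃ E₄ π₁ π₂ π₃ π₄ ΔY μg μc
      = ∫ ω, τ ω ∂μ[|E₁] - ∫ ω, τ' ω ∂μ[|E₁] := by
  have hπ₁bd := ae_norm_le_one_of_ae_eq_condExp_indicator hπ₁
  have hne : ∀ {π : Ω → ℝ}, (∀ᵐ ω ∂μ, ε ≤ π ω) → ∀ᵐ ω ∂μ, π ω ≠ 0 :=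
    fun h => h.mono fun _ h => (hε.trans_le h).ne'
  have hmodels : ∫ ω, μg ω * π₁ ω ∂μ - ∫ ω, μc ω * π₁ ω ∂μ = ∫ ω, E₁.indicator τ' ω ∂μ := by
    rw [← integral_sub (hμgi.mul_bdd (hπ₁m.mono hm).aestronglyMeasurable hπ₁bd)
      (hμci.mul_bdd (hπ₁m.mono hm).aestronglyMeasurable hπ₁bd),
      ← integral_condExp hm (f := E₁.indicator τ')]
    refine integral_congr_ae ((ae_sub_mul_eq_condExp_of_selection_of_trend hE₂ hτ' hΔ'
      (hne hπ₂ε) (hne hπ₄ε) hΔY₂ hΔY₄ hμg hμc hsel htrend').mono fun ω h => ?_)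
    rw [← h]
    ring
  have htreated : ∫ ω, E₁.indicator ΔY ω ∂μ
      = ∫ ω, E₁.indicator τ ω ∂μ + ∫ ω, E₁.indicator Δ ω ∂μ := by
    rw [indicator_congr hΔY₁, indicator_add']
    exact integral_add (hτ.indicator hE₁) (hΔ.indicator hE₁)
  have hcomparison : ∫ ω, π₁ ω / π₃ ω * (μ[E₃.indicator ΔY|m]) ω ∂μ
      = ∫ ω, E₁.indicator Δ ω ∂μ := by
    rw [indicator_congr hΔY₃]
    exact integral_div_mul_condExp_eq_of_ae_mul_eq hm (hne hπ₃ε) htrend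
  rw [drEstimand_eq_div_measureReal hm hE₁ hE₂ hE₃ hE₄ hπ₁m hπ₁ hπ₂m hπ₂ hπ₃m hπ₃ hπ₄m hπ₄ hε
      hπ₂ε hπ₃ε hπ₄ε hΔY hμgm hμgi hμcm hμci hμg hμc, hcomparison, htreated,
    integral_cond_eq_inv_mul_integral_indicator hE₁,
    integral_cond_eq_inv_mul_integral_indicator hE₁]
  linear_combination -(μ.real E₁)⁻¹ * hmodels

end Propensity

section ObservedOutcomes

variable {Ω : Type*} {G : Ω → ℕ∞} {S : Set Ω} {Y Z : ℕ → ℕ∞ → Ω → ℝ} {Yobs : ℕ → Ω → ℝ}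

lemma eqOn_observedChange_cohort
    (hYobs : ∀ τ ω, Yobs τ ω = if G ω ≤ (τ : ℕ∞) then Y τ (G ω) ω else Y τ ⊤ ω)
    (hZ : ∀ τ γ, EqOn (Y τ γ) (Z τ γ) S) {g t τ₀ : ℕ} (hτ₀ : τ₀ < g) (hgt : g ≤ t) :
    EqOn (fun ω => Yobs t ω - Yobs τ₀ ω)
      ((fun ω => Z t g ω - Z t ⊤ ω) + fun ω => Z t ⊤ ω - Z τ₀ ⊤ ω) ({ω | G ω = g} ∩ S) := by
  rintro ω ⟨hG, hS⟩
  have hG : G ω = g := hG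
  simp only [Pi.add_apply, hYobs, hG, Nat.cast_le, if_pos hgt, if_neg (not_le.2 hτ₀),
    hZ _ _ hS]
  ring

lemma eqOn_observedChange_notYetTreated
    (hYobs : ∀ τ ω, Yobs τ ω = if G ω ≤ (τ : ℕ∞) then Y τ (G ω) ω else Y τ ⊤ ω)
    (hZ : ∀ τ γ, EqOn (Y τ γ) (Z τ γ) S) {t τ₀ : ℕ} (hτ₀ : τ₀ ≤ t) :
    EqOn (fun ω => Yobs t ω - Yobs τ₀ ω) (fun ω => Z t ⊤ ω - Z τ₀ ⊤ ω)
      ({ω | (t : ℕ∞) < G ω} ∩ S) := by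
  rintro ω ⟨hG : (t : ℕ∞) < G ω, hS⟩
  have hG' : (τ₀ : ℕ∞) < G ω := lt_of_le_of_lt (by exact_mod_cast hτ₀) hG
  simp only [hYobs, if_neg (not_le.2 hG), if_neg (not_le.2 hG'), hZ _ _ hS]

end ObservedOutcomes

theorem cdatt_dr_identification_not_yet_treated_general
    {Ω : Type*} [m0 : MeasurableSpace Ω] (μ : Measure Ω) [IsProbabilityMeasure μ]
    (G : Ω → ℕ∞) (hGmeas : Measurable G)
    (Ss : Set Ω) (hSs : MeasurableSet Ss)
    (Ys Ys' Y : ℕ → ℕ∞ → Ω → ℝ)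
    (hY : ∀ τ γ ω, Y τ γ ω = if ω ∈ Ss then Ys τ γ ω else Ys' τ γ ω)
    (hIntYs : ∀ τ γ, Integrable (Ys τ γ) μ)
    (hIntYs' : ∀ τ γ, Integrable (Ys' τ γ) μ)
    (Yobs : ℕ → Ω → ℝ)
    (hYobs : ∀ τ ω, Yobs τ ω = if G ω ≤ (τ : ℕ∞) then Y τ (G ω) ω else Y τ ⊤ ω)
    (hIntYobs : ∀ τ, Integrable (Yobs τ) μ)
    (g t : ℕ) (hg1 : 1 ≤ g) (hgt : g ≤ t)
    -- covariate σ-algebra and comparison event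
    (𝒳 : MeasurableSpace Ω) (h𝒳 : 𝒳 ≤ m0)
    (C : Set Ω) (hC : C = {ω | (t : ℕ∞) < G ω})
    -- group-subgroup events
    (Egs Egs' Ecs Ecs' : Set Ω)
    (hEgs : Egs = {ω | G ω = (g : ℕ∞)} ∩ Ss)
    (hEgs' : Egs' = {ω | G ω = (g : ℕ∞)} ∩ Ssᶜ)
    (hEcs : Ecs = C ∩ Ss) (hEcs' : Ecs' = C ∩ Ssᶜ)
    -- propensity scores: versions of the conditional expectations of indicators
    (πgs πgs' πcs πcs' : Ω → ℝ)
    (hπgs_meas : StronglyMeasurable[𝒳] πgs)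
    (hπgs : πgs =ᵐ[μ] μ[Egs.indicator (fun _ => (1 : ℝ)) | 𝒳])
    (hπgs'_meas : StronglyMeasurable[𝒳] πgs')
    (hπgs' : πgs' =ᵐ[μ] μ[Egs'.indicator (fun _ => (1 : ℝ)) | 𝒳])
    (hπcs_meas : StronglyMeasurable[𝒳] πcs)
    (hπcs : πcs =ᵐ[μ] μ[Ecs.indicator (fun _ => (1 : ℝ)) | 𝒳])
    (hπcs'_meas : StronglyMeasurable[𝒳] πcs')
    (hπcs' : πcs' =ᵐ[μ] μ[Ecs'.indicator (fun _ => (1 : ℝ)) | 𝒳])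
    -- overlap (Assumption 9)
    (ε : ℝ) (hε : 0 < ε)
    (p : ℝ) (hp : p = (μ Egs).toReal)
    (hπgs'_bd : ∀ᵐ ω ∂μ, ε ≤ πgs' ω)
    (hπcs_bd : ∀ᵐ ω ∂μ, ε ≤ πcs ω)
    (hπcs'_bd : ∀ᵐ ω ∂μ, ε ≤ πcs' ω)
    -- observed change and counterfactual untreated changes
    (ΔY Δs Δs' : Ω → ℝ)
    (hΔY : ΔY = fun ω => Yobs t ω - Yobs (g - 1) ω)
    (hΔs : Δs = fun ω => Ys t ⊤ ω - Ys (g - 1) ⊤ ω)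
    (hΔs' : Δs' = fun ω => Ys' t ⊤ ω - Ys' (g - 1) ⊤ ω)
    -- (a) conditional no subgroup selection
    (ha : (fun ω => (μ[Egs.indicator (fun ω' => Ys' t (g : ℕ∞) ω' - Ys' t ⊤ ω') | 𝒳]) ω * πgs' ω)
        =ᵐ[μ] fun ω => (μ[Egs'.indicator (fun ω' => Ys' t (g : ℕ∞) ω' - Ys' t ⊤ ω') | 𝒳]) ω * πgs ω)
    -- (b) conditional parallel trends within each subgroup
    (hb_s : (fun ω => (μ[Egs.indicator Δs | 𝒳]) ω * πcs ω)
        =ᵐ[μ] fun ω => (μ[Ecs.indicator Δs | 𝒳]) ω * πgs ω)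
    (hb_s' : (fun ω => (μ[Egs'.indicator Δs' | 𝒳]) ω * πcs' ω)
        =ᵐ[μ] fun ω => (μ[Ecs'.indicator Δs' | 𝒳]) ω * πgs' ω)
    -- outcome models (𝒳-measurable, integrable)
    (μg' μc' : Ω → ℝ)
    (hμg'_meas : StronglyMeasurable[𝒳] μg') (hμg'_int : Integrable μg' μ)
    (hμc'_meas : StronglyMeasurable[𝒳] μc') (hμc'_int : Integrable μc' μ)
    (hμg' : (fun ω => μg' ω * πgs' ω) =ᵐ[μ] μ[Egs'.indicator ΔY | 𝒳])
    (hμc' : (fun ω => μc' ω * πcs' ω) =ᵐ[μ] μ[Ecs'.indicator ΔY | 𝒳])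
    -- weights
    (w₁ w₂ w₃ w₄ : Ω → ℝ)
    (hw₁ : w₁ = fun ω => Egs.indicator (fun _ => (1 : ℝ)) ω / p)
    (hw₂ : w₂ = fun ω => (Egs'.indicator (fun _ => (1 : ℝ)) ω * πgs ω / πgs' ω)
        / ∫ ω', Egs'.indicator (fun _ => (1 : ℝ)) ω' * πgs ω' / πgs' ω' ∂μ)
    (hw₃ : w₃ = fun ω => (Ecs.indicator (fun _ => (1 : ℝ)) ω * πgs ω / πcs ω)
        / ∫ ω', Ecs.indicator (fun _ => (1 : ℝ)) ω' * πgs ω' / πcs ω' ∂μ)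
    (hw₄ : w₄ = fun ω => (Ecs'.indicator (fun _ => (1 : ℝ)) ω * πgs ω / πcs' ω)
        / ∫ ω', Ecs'.indicator (fun _ => (1 : ℝ)) ω' * πgs ω' / πcs' ω' ∂μ) :
    -- doubly-robust estimand = CDATT(g,t)
    (∫ ω, (w₁ ω - w₂ ω) * (ΔY ω - μg' ω) ∂μ)
      - (∫ ω, (w₃ ω - w₄ ω) * (ΔY ω - μc' ω) ∂μ)
    = (∫ ω, (Ys t (g : ℕ∞) ω - Ys t ⊤ ω) ∂(μ[|Egs]))
      - (∫ ω, (Ys' t (g : ℕ∞) ω - Ys' t ⊤ ω) ∂(μ[|Egs])) := by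
  subst hw₁ hw₂ hw₃ hw₄ hp hΔY hΔs hΔs' hEgs hEgs' hEcs hEcs' hC
  have hcohort : MeasurableSet[m0] {ω | G ω = (g : ℕ∞)} :=
    hGmeas (.of_discrete : MeasurableSet {(g : ℕ∞)})
  have hnotYet : MeasurableSet[m0] {ω | (t : ℕ∞) < G ω} :=
    hGmeas (.of_discrete : MeasurableSet (Ioi (t : ℕ∞)))
  have hYs : ∀ τ γ, EqOn (Y τ γ) (Ys τ γ) Ss := fun τ γ ω hω => by rw [hY, if_pos hω]
  have hYs' : ∀ τ γ, EqOn (Y τ γ) (Ys' τ γ) Ssᶜ := fun τ γ ω hω => by rw [hY, if_neg hω]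
  have hg : g - 1 < g := by omega
  have hg' : g - 1 ≤ t := by omega
  exact drEstimand_eq_cdatt h𝒳 (hcohort.inter hSs) (hcohort.inter hSs.compl)
    (hnotYet.inter hSs) (hnotYet.inter hSs.compl) hπgs_meas hπgs hπgs'_meas hπgs' hπcs_meas hπcs
    hπcs'_meas hπcs' hε hπgs'_bd hπcs_bd hπcs'_bd
    ((hIntYobs t).sub (hIntYobs (g - 1))) ((hIntYs t g).sub (hIntYs t ⊤))
    ((hIntYs' t g).sub (hIntYs' t ⊤)) ((hIntYs t ⊤).sub (hIntYs (g - 1) ⊤))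
    ((hIntYs' t ⊤).sub (hIntYs' (g - 1) ⊤))
    (eqOn_observedChange_cohort hYobs hYs hg hgt) (eqOn_observedChange_cohort hYobs hYs' hg hgt)
    (eqOn_observedChange_notYetTreated hYobs hYs hg')
    (eqOn_observedChange_notYetTreated hYobs hYs' hg')
    ha hb_s hb_s' hμg'_meas hμg'_int hμc'_meas hμc'_int hμg' hμc'

/-- Proposition 3, doubly-robust identification of `CDATT(g,t)` with the
not-yet-treated comparison group `C = {G > t}`:
`E[(w₁ − w₂)·(ΔY − μ^{s'}_g)] − E[(w₃ − w₄)·(ΔY − μ^{s'}_c)] = CDATT(g,t)`. -/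
theorem cdatt_dr_identification_not_yet_treated
    {Ω : Type*} [m0 : MeasurableSpace Ω] (μ : Measure Ω) [IsProbabilityMeasure μ]
    (T : ℕ) (hT : 1 ≤ T)
    (G : Ω → ℕ∞) (hGmeas : Measurable G)
    (hGrange : ∀ ω, G ω = ⊤ ∨ (1 ≤ G ω ∧ G ω ≤ (T : ℕ∞)))
    (Ss : Set Ω) (hSs : MeasurableSet Ss)
    (Ys Ys' Y : ℕ → ℕ∞ → Ω → ℝ)
    (hY : ∀ τ γ ω, Y τ γ ω = if ω ∈ Ss then Ys τ γ ω else Ys' τ γ ω)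
    (hIntYs : ∀ τ γ, Integrable (Ys τ γ) μ)
    (hIntYs' : ∀ τ γ, Integrable (Ys' τ γ) μ)
    (Yobs : ℕ → Ω → ℝ)
    (hYobs : ∀ τ ω, Yobs τ ω = if G ω ≤ (τ : ℕ∞) then Y τ (G ω) ω else Y τ ⊤ ω)
    (hIntYobs : ∀ τ, Integrable (Yobs τ) μ)
    (g t : ℕ) (hg1 : 1 ≤ g) (hgt : g ≤ t) (htT : t ≤ T)
    -- covariate σ-algebra and comparison event
    (𝒳 : MeasurableSpace Ω) (h𝒳 : 𝒳 ≤ m0)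
    (C : Set Ω) (hC : C = {ω | (t : ℕ∞) < G ω})
    -- group-subgroup events
    (Egs Egs' Ecs Ecs' : Set Ω)
    (hEgs : Egs = {ω | G ω = (g : ℕ∞)} ∩ Ss)
    (hEgs' : Egs' = {ω | G ω = (g : ℕ∞)} ∩ Ssᶜ)
    (hEcs : Ecs = C ∩ Ss) (hEcs' : Ecs' = C ∩ Ssᶜ)
    -- propensity scores: versions of the conditional expectations of indicators
    (πgs πgs' πcs πcs' : Ω → ℝ)
    (hπgs_meas : StronglyMeasurable[𝒳] πgs)
    (hπgs : πgs =ᵐ[μ] μ[Egs.indicator (fun _ => (1 : ℝ)) | 𝒳])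
    (hπgs'_meas : StronglyMeasurable[𝒳] πgs')
    (hπgs' : πgs' =ᵐ[μ] μ[Egs'.indicator (fun _ => (1 : ℝ)) | 𝒳])
    (hπcs_meas : StronglyMeasurable[𝒳] πcs)
    (hπcs : πcs =ᵐ[μ] μ[Ecs.indicator (fun _ => (1 : ℝ)) | 𝒳])
    (hπcs'_meas : StronglyMeasurable[𝒳] πcs')
    (hπcs' : πcs' =ᵐ[μ] μ[Ecs'.indicator (fun _ => (1 : ℝ)) | 𝒳])
    -- overlap (Assumption 9)
    (ε : ℝ) (hε : 0 < ε)
    (p : ℝ) (hp : p = (μ Egs).toReal) (hpε : ε < p)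
    (hπgs'_bd : ∀ᵐ ω ∂μ, ε ≤ πgs' ω)
    (hπcs_bd : ∀ᵐ ω ∂μ, ε ≤ πcs ω)
    (hπcs'_bd : ∀ᵐ ω ∂μ, ε ≤ πcs' ω)
    -- observed change and counterfactual untreated changes
    (ΔY Δs Δs' : Ω → ℝ)
    (hΔY : ΔY = fun ω => Yobs t ω - Yobs (g - 1) ω)
    (hΔs : Δs = fun ω => Ys t ⊤ ω - Ys (g - 1) ⊤ ω)
    (hΔs' : Δs' = fun ω => Ys' t ⊤ ω - Ys' (g - 1) ⊤ ω)
    -- (a) conditional no subgroup selection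
    (ha : (fun ω => (μ[Egs.indicator (fun ω' => Ys' t (g : ℕ∞) ω' - Ys' t ⊤ ω') | 𝒳]) ω * πgs' ω)
        =ᵐ[μ] fun ω => (μ[Egs'.indicator (fun ω' => Ys' t (g : ℕ∞) ω' - Ys' t ⊤ ω') | 𝒳]) ω * πgs ω)
    -- (b) conditional parallel trends within each subgroup
    (hb_s : (fun ω => (μ[Egs.indicator Δs | 𝒳]) ω * πcs ω)
        =ᵐ[μ] fun ω => (μ[Ecs.indicator Δs | 𝒳]) ω * πgs ω)
    (hb_s' : (fun ω => (μ[Egs'.indicator Δs' | 𝒳]) ω * πcs' ω)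
        =ᵐ[μ] fun ω => (μ[Ecs'.indicator Δs' | 𝒳]) ω * πgs' ω)
    -- (c) conditional parallel gaps across subgroups for the s'-counterfactual change
    (hc_g : (fun ω => (μ[Egs.indicator Δs' | 𝒳]) ω * πgs' ω)
        =ᵐ[μ] fun ω => (μ[Egs'.indicator Δs' | 𝒳]) ω * πgs ω)
    (hc_c : (fun ω => (μ[Ecs.indicator Δs' | 𝒳]) ω * πcs' ω)
        =ᵐ[μ] fun ω => (μ[Ecs'.indicator Δs' | 𝒳]) ω * πcs ω)
    -- outcome models (𝒳-measurable, integrable)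
    (μg' μc' : Ω → ℝ)
    (hμg'_meas : StronglyMeasurable[𝒳] μg') (hμg'_int : Integrable μg' μ)
    (hμc'_meas : StronglyMeasurable[𝒳] μc') (hμc'_int : Integrable μc' μ)
    (hμg' : (fun ω => μg' ω * πgs' ω) =ᵐ[μ] μ[Egs'.indicator ΔY | 𝒳])
    (hμc' : (fun ω => μc' ω * πcs' ω) =ᵐ[μ] μ[Ecs'.indicator ΔY | 𝒳])
    -- weights
    (w₁ w₂ w₃ w₄ : Ω → ℝ)
    (hw₁ : w₁ = fun ω => Egs.indicator (fun _ => (1 : ℝ)) ω / p)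
    (hw₂ : w₂ = fun ω => (Egs'.indicator (fun _ => (1 : ℝ)) ω * πgs ω / πgs' ω)
        / ∫ ω', Egs'.indicator (fun _ => (1 : ℝ)) ω' * πgs ω' / πgs' ω' ∂μ)
    (hw₃ : w₃ = fun ω => (Ecs.indicator (fun _ => (1 : ℝ)) ω * πgs ω / πcs ω)
        / ∫ ω', Ecs.indicator (fun _ => (1 : ℝ)) ω' * πgs ω' / πcs ω' ∂μ)
    (hw₄ : w₄ = fun ω => (Ecs'.indicator (fun _ => (1 : ℝ)) ω * πgs ω / πcs' ω)
        / ∫ ω', Ecs'.indicator (fun _ => (1 : ℝ)) ω' * πgs ω' / πcs' ω' ∂μ) :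
    -- doubly-robust estimand = CDATT(g,t)
    (∫ ω, (w₁ ω - w₂ ω) * (ΔY ω - μg' ω) ∂μ)
      - (∫ ω, (w₃ ω - w₄ ω) * (ΔY ω - μc' ω) ∂μ)
    = (∫ ω, (Ys t (g : ℕ∞) ω - Ys t ⊤ ω) ∂(μ[|Egs]))
      - (∫ ω, (Ys' t (g : ℕ∞) ω - Ys' t ⊤ ω) ∂(μ[|Egs])) :=
  cdatt_dr_identification_not_yet_treated_general (m0 := m0) μ G hGmeas Ss hSs Ys Ys' Y hY hIntYs
    hIntYs' Yobs hYobs hIntYobs g t hg1 hgt 𝒳 h𝒳 C hC Egs Egs' Ecs Ecs' hEgs hEgs' hEcs hEcs' πgs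
    πgs' πcs πcs' hπgs_meas hπgs hπgs'_meas hπgs' hπcs_meas hπcs hπcs'_meas hπcs' ε hε p hp hπgs'_bd
    hπcs_bd hπcs'_bd ΔY Δs Δs' hΔY hΔs hΔs' ha hb_s hb_s' μg' μc' hμg'_meas hμg'_int hμc'_meas
    hμc'_int hμg' hμc' w₁ w₂ w₃ w₄ hw₁ hw₂ hw₃ hw₄
end
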